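/- Adding an edge (t, s) to a digraph G, where t belongs to a sink SCC T and s belongs to a source SCC S with S ≠ T, does not change the membership of any source SCC other than S or of any sink SCC other than T: if S' is a source SCC of G distinct from S, then S' is still a source SCC of G + (t, s), and likewise for sink SCCs distinct from T. -/

import Mathlib

variable {V : Type*}

/-- Directed reachability: reflexive-transitive closure of the edge relation. -/
def Reach (E : V → V → Prop) : V → V → Prop :=
  Relation.ReflTransGen E

/-- Mutual reachability. -/
def Mut (E : V → V → Prop) (u v : V) : Prop :=
  Reach E u v ∧ Reach E v u

/-- A strongly connected component: an equivalence class of mutual reachability. -/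
def IsSCC (E : V → V → Prop) (S : Set V) : Prop :=
  ∃ v, S = {w | Mut E v w}

/-- No edge enters `S` from outside `S`. -/
def NoIn (E : V → V → Prop) (S : Set V) : Prop :=
  ∀ a b, E a b → b ∈ S → a ∈ S

/-- No edge leaves `S`. -/
def NoOut (E : V → V → Prop) (S : Set V) : Prop :=
  ∀ a b, E a b → a ∈ S → b ∈ S

/-- Some edge leaves `S`. -/
def SomeOut (E : V → V → Prop) (S : Set V) : Prop :=
  ∃ a b, E a b ∧ a ∈ S ∧ b ∉ S

/-- Some edge enters `S` from outside. -/
def SomeIn (E : V → V → Prop) (S : Set V) : Prop :=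
  ∃ a b, E a b ∧ a ∉ S ∧ b ∈ S

/-- Weak connectivity: the underlying undirected graph is connected. -/
def WeaklyConn (E : V → V → Prop) : Prop :=
  ∀ u v : V, Relation.ReflTransGen (fun a b => E a b ∨ E b a) u v

/-- The source SCCs: SCCs with some outgoing edge but no incoming edge. -/
def SourceSCCs (E : V → V → Prop) : Set (Set V) :=
  {S | IsSCC E S ∧ NoIn E S ∧ SomeOut E S}

/-- The sink (target) SCCs: SCCs with some incoming edge but no outgoing edge. -/
def SinkSCCs (E : V → V → Prop) : Set (Set V) :=
  {S | IsSCC E S ∧ NoOut E S ∧ SomeIn E S}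


private lemma mut_symm {E : V → V → Prop} {u v : V} (h : Mut E u v) : Mut E v u :=
  ⟨h.2, h.1⟩

private lemma mut_trans {E : V → V → Prop} {u v w : V} (h1 : Mut E u v) (h2 : Mut E v w) :
    Mut E u w :=
  ⟨h1.1.trans h2.1, h2.2.trans h1.2⟩

private lemma scc_eq_of_mem {E : V → V → Prop} {S S' : Set V} (hS : IsSCC E S)
    (hS' : IsSCC E S') {x : V} (hx : x ∈ S) (hx' : x ∈ S') : S = S' := by
  obtain ⟨v, rfl⟩ := hS
  obtain ⟨v', rfl⟩ := hS'
  ext w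
  constructor
  · exact fun hw => mut_trans hx' (mut_trans (mut_symm hx) hw)
  · exact fun hw => mut_trans hx (mut_trans (mut_symm hx') hw)

private lemma reach_in {E : V → V → Prop} {S : Set V} (h : NoIn E S) {u v : V}
    (hr : Reach E u v) (hv : v ∈ S) : u ∈ S := by
  induction hr using Relation.ReflTransGen.head_induction_on with
  | refl => exact hv
  | head hab _ ih => exact h _ _ hab ih

private lemma reach_out {E : V → V → Prop} {S : Set V} (h : NoOut E S) {u v : V}
    (hr : Reach E u v) (hu : u ∈ S) : v ∈ S := by
  induction hr with
  | refl => exact hu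
  | tail _ hbc ih => exact h _ _ hbc ih

/-- adding the edge (t,s), with t in sink SCC T and s in source SCC S,
leaves every other source SCC a source SCC and every other sink SCC a sink SCC. -/
theorem stmt_14 [Fintype V] (E : V → V → Prop)
    (S T : Set V)
    (hS : IsSCC E S) (hSsrc : NoIn E S)
    (hT : IsSCC E T) (hTsink : NoOut E T)
    (hST : S ≠ T) (s t : V) (hs : s ∈ S) (ht : t ∈ T) :
    (∀ S' : Set V, IsSCC E S' → NoIn E S' → S' ≠ S →
      IsSCC (fun a b => E a b ∨ (a = t ∧ b = s)) S' ∧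
      NoIn (fun a b => E a b ∨ (a = t ∧ b = s)) S') ∧
    (∀ T' : Set V, IsSCC E T' → NoOut E T' → T' ≠ T →
      IsSCC (fun a b => E a b ∨ (a = t ∧ b = s)) T' ∧
      NoOut (fun a b => E a b ∨ (a = t ∧ b = s)) T') := by
  set E' : V → V → Prop := fun a b => E a b ∨ (a = t ∧ b = s) with hE'
  have hmono : ∀ u v, Reach E u v → Reach E' u v := fun u v h =>
    Relation.ReflTransGen.mono (fun a b hab => Or.inl hab) _ _ h
  constructor
  · intro S' hS' hS'in hne
    have hsns : s ∉ S' := fun hss => hne (scc_eq_of_mem hS' hS hss hs)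
    have hin' : NoIn E' S' := by
      intro a b hab hb
      rcases hab with hab | ⟨rfl, rfl⟩
      · exact hS'in _ _ hab hb
      · exact absurd hb hsns
    refine ⟨?_, hin'⟩
    obtain ⟨v, rfl⟩ := hS'
    refine ⟨v, ?_⟩
    ext w
    constructor
    · exact fun hw => ⟨hmono _ _ hw.1, hmono _ _ hw.2⟩
    · intro hw
      have hv : v ∈ {w | Mut E v w} := ⟨Relation.ReflTransGen.refl, Relation.ReflTransGen.refl⟩
      exact reach_in hin' hw.2 hv
  · intro T' hT' hT'out hne
    have htnt : t ∉ T' := fun htt => hne (scc_eq_of_mem hT' hT htt ht)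
    have hout' : NoOut E' T' := by
      intro a b hab ha
      rcases hab with hab | ⟨rfl, rfl⟩
      · exact hT'out _ _ hab ha
      · exact absurd ha htnt
    refine ⟨?_, hout'⟩
    obtain ⟨v, rfl⟩ := hT'
    refine ⟨v, ?_⟩
    ext w
    constructor
    · exact fun hw => ⟨hmono _ _ hw.1, hmono _ _ hw.2⟩
    · intro hw
      have hv : v ∈ {w | Mut E v w} := ⟨Relation.ReflTransGen.refl, Relation.ReflTransGen.refl⟩
      exact reach_out hout' hw.1 hv
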